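/- For θ > 0 and integers 1 ≤ m ≤ n, the normalized binomial moment q(n:m) = w(n:m)/(1 - w(n:0)), where w(n:m) = θ · C(n,m) · B(m+1, n-m+θ), equals (θ/n) · (n!/(n-m)!) · [θ]_{n-m}/[θ]_n. -/

import Mathlib

noncomputable def betaFn (a b : ℝ) : ℝ := ∫ t in (0:ℝ)..1, t ^ (a - 1) * (1 - t) ^ (b - 1)

noncomputable def risingFact (x : ℝ) (k : ℕ) : ℝ := ∏ i ∈ Finset.range k, (x + i)

noncomputable def w (θ : ℝ) (n m : ℕ) : ℝ :=
  θ * (n.choose m : ℝ) * betaFn ((m : ℝ) + 1) ((n : ℝ) - (m : ℝ) + θ)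

/-!
With `B(m + 1, b) = m! / [b]_{m+1}` and `[θ]_{n+1} = [θ]_{n-m} [θ + n - m]_{m+1}` one gets the
closed form `w(n:m) = θ · n!/(n-m)! · [θ]_{n-m} / [θ]_{n+1}` for all `m ≤ n`. In particular
`w(n:0) = θ / (θ + n)`, so `1 - w(n:0) = n / (θ + n)`, and the factor `θ + n` cancels against
`[θ]_{n+1} = [θ]_n (θ + n)`.
-/

lemma ofReal_betaFn (a b : ℝ) : ((betaFn a b : ℝ) : ℂ) = Complex.betaIntegral a b := by
  rw [betaFn, Complex.betaIntegral, ← intervalIntegral.integral_ofReal]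
  refine intervalIntegral.integral_congr fun x hx => ?_
  rw [Set.uIcc_of_le zero_le_one] at hx
  have hx' : (0:ℝ) ≤ 1 - x := by linarith [hx.2]
  simp only [Complex.ofReal_mul, Complex.ofReal_cpow hx.1, Complex.ofReal_cpow hx',
    Complex.ofReal_sub, Complex.ofReal_one]

lemma risingFact_succ (x : ℝ) (k : ℕ) : risingFact x (k + 1) = risingFact x k * (x + k) :=
  Finset.prod_range_succ _ k

lemma risingFact_add (x : ℝ) (k l : ℕ) :
    risingFact x (k + l) = risingFact x k * risingFact (x + k) l := by
  simp only [risingFact, Finset.prod_range_add, Nat.cast_add, add_assoc]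

lemma risingFact_pos {x : ℝ} (hx : 0 < x) (k : ℕ) : 0 < risingFact x k :=
  Finset.prod_pos fun _ _ => by positivity

lemma betaFn_natCast_add_one_left {b : ℝ} (hb : 0 < b) (m : ℕ) :
    betaFn ((m : ℝ) + 1) b = m.factorial / risingFact b (m + 1) := by
  apply Complex.ofReal_injective
  rw [ofReal_betaFn, Complex.betaIntegral_symm]
  push_cast [risingFact]
  exact Complex.betaIntegral_eval_nat_add_one_right (by simpa using hb) m

lemma w_eq {θ : ℝ} (hθ : 0 < θ) {n m : ℕ} (hmn : m ≤ n) :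
    w θ n m = θ * ((n.factorial : ℝ) / (n - m).factorial) *
      (risingFact θ (n - m) / risingFact θ (n + 1)) := by
  have hb : 0 < (n : ℝ) - m + θ := by
    have : (m : ℝ) ≤ n := by exact_mod_cast hmn
    linarith
  have hsplit :
      risingFact θ (n + 1) = risingFact θ (n - m) * risingFact ((n : ℝ) - m + θ) (m + 1) := by
    rw [show n + 1 = (n - m) + (m + 1) by omega, risingFact_add, Nat.cast_sub hmn, add_comm θ]
  have hchoose : (n.choose m : ℝ) * m.factorial * (n - m).factorial = n.factorial := by
    exact_mod_cast Nat.choose_mul_factorial_mul_factorial hmn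
  have := risingFact_pos hθ (n - m)
  have := risingFact_pos hb (m + 1)
  rw [w, betaFn_natCast_add_one_left hb, hsplit, ← hchoose]
  field_simp

lemma w_zero {θ : ℝ} (hθ : 0 < θ) (n : ℕ) : w θ n 0 = θ / (θ + n) := by
  have := risingFact_pos hθ n
  have : 0 < θ + n := by positivity
  rw [w_eq hθ (Nat.zero_le n), risingFact_succ, Nat.sub_zero]
  field_simp

theorem normalized_binomial_moment (θ : ℝ) (hθ : 0 < θ) (n m : ℕ) (hm : 1 ≤ m) (hmn : m ≤ n) :
    w θ n 0 < 1 ∧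
    w θ n m / (1 - w θ n 0)
      = (θ / n) * ((n.factorial : ℝ) / ((n - m).factorial : ℝ)) *
          (risingFact θ (n - m) / risingFact θ n) := by
  have hn : (0 : ℝ) < n := by exact_mod_cast hm.trans hmn
  have hθn : 0 < θ + n := by positivity
  have hdenom : 1 - w θ n 0 = n / (θ + n) := by
    rw [w_zero hθ]
    field_simp
    ring
  have := risingFact_pos hθ n
  refine ⟨by linarith [div_pos hn hθn], ?_⟩
  rw [hdenom, w_eq hθ hmn, risingFact_succ]
  field_simp
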